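/- For every ρ > 0, the quantity Q(ρ) = ∫_{−1}^{1} (1−x)^a (1+x)^b log₂(1 + ρ(1−x)/2) · P_r^{a,b}(x) · P_{r-2}^{a+1,b+1}(x) dx satisfies Q(ρ) ≤ (ρ / (2 ln 2)) · ∫_{−1}^{1} (1−x)^{a+1} (1+x)^b · P_r^{a,b}(x) · P_{r-2}^{a+1,b+1}(x) dx. -/

import Mathlib

open scoped BigOperators

/-- The Jacobi polynomial `P_n^{a,b}` (nonnegative integer parameters), via the
standard closed form `P_n^{a,b}(x) = ∑_{s=0}^n C(n+a, n-s) C(n+b, s)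
((x-1)/2)^s ((x+1)/2)^{n-s}`; these are orthogonal on [-1,1] for the weight
`(1-x)^a (1+x)^b` and normalized so that `P_n^{a,b}(1) = C(n+a, n)`. -/
noncomputable def jacobiP (a b n : ℕ) (x : ℝ) : ℝ :=
  ∑ s ∈ Finset.range (n + 1),
    (Nat.choose (n + a) (n - s) : ℝ) * (Nat.choose (n + b) s : ℝ) *
      ((x - 1) / 2) ^ s * ((x + 1) / 2) ^ (n - s)

/-- Squared L² norm of `P_n^{a,b}` for the weight `(1-x)^a (1+x)^b` on [-1,1]:
`‖P_n^{a,b}‖² = (2^{a+b+1}/(2n+a+b+1)) (n+a)!(n+b)! / ((n+a+b)! n!)`. -/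
noncomputable def jacobiNormSq (a b n : ℕ) : ℝ :=
  (2 : ℝ) ^ (a + b + 1) / (2 * (n : ℝ) + (a : ℝ) + (b : ℝ) + 1) *
    ((Nat.factorial (n + a) : ℝ) * (Nat.factorial (n + b) : ℝ)) /
    ((Nat.factorial (n + a + b) : ℝ) * (Nat.factorial n : ℝ))

/-- `M_r^{a,b} = (r+a+b+1)! r! / (2^{a+b+1} (r+a-1)! (r+b-1)! (2r+a+b))`. -/
noncomputable def Mconst (a b r : ℕ) : ℝ :=
  ((Nat.factorial (r + a + b + 1) : ℝ) * (Nat.factorial r : ℝ)) /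
    ((2 : ℝ) ^ (a + b + 1) * (Nat.factorial (r + a - 1) : ℝ) *
      (Nat.factorial (r + b - 1) : ℝ) * (2 * (r : ℝ) + (a : ℝ) + (b : ℝ)))

/-- `N_r^{a,b} = (r+a+b)/(r+a+b+1)`. -/
noncomputable def Nconst (a b r : ℕ) : ℝ :=
  ((r : ℝ) + (a : ℝ) + (b : ℝ)) / ((r : ℝ) + (a : ℝ) + (b : ℝ) + 1)

/-- The ergodic capacity of the Jacobi MIMO channel at SNR `ρ` (case
`m_r + m_t ≤ m`, with `a = |m_r - m_t|`, `b = m - m_r - m_t`, `r = min(m_r, m_t)`):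
`C(ρ) = ∫_{-1}^1 (1-x)^a (1+x)^b log₂(1+ρ(1-x)/2) ∑_{k<r} P_k^{a,b}(x)²/‖P_k^{a,b}‖² dx`. -/
noncomputable def capC (a b r : ℕ) (ρ : ℝ) : ℝ :=
  ∫ x in (-1 : ℝ)..1,
    (1 - x) ^ a * (1 + x) ^ b * Real.logb 2 (1 + ρ * (1 - x) / 2) *
      ∑ k ∈ Finset.range r, (jacobiP a b k x) ^ 2 / jacobiNormSq a b k

open Polynomial MeasureTheory intervalIntegral

noncomputable def jPoly (a b n : ℕ) : Polynomial ℝ :=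
  Polynomial.C (((2 : ℝ) ^ n)⁻¹) *
    ∑ s ∈ Finset.range (n + 1),
      Polynomial.C ((Nat.choose (n + a) (n - s) : ℝ) * (Nat.choose (n + b) s : ℝ)) *
        (X - Polynomial.C 1) ^ s * (X - Polynomial.C (-1)) ^ (n - s)

lemma jPoly_eval (a b n : ℕ) (x : ℝ) : (jPoly a b n).eval x = jacobiP a b n x := by
  simp only [jPoly, jacobiP, eval_mul, eval_C, eval_finset_sum, eval_pow, eval_sub, eval_X,
    Finset.mul_sum]
  refine Finset.sum_congr rfl fun s hs => ?_
  have hs' : s ≤ n := Nat.lt_succ_iff.mp (Finset.mem_range.mp hs)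
  have hsn : s + (n - s) = n := by omega
  have h2 : ((2:ℝ)^n)⁻¹ = ((2:ℝ)^s)⁻¹ * ((2:ℝ)^(n-s))⁻¹ := by
    rw [← mul_inv, ← pow_add, hsn]
  have hx : x - (-1) = x + 1 := by ring
  rw [h2, hx, div_pow, div_pow]
  field_simp

lemma natDegree_jPoly (a b n : ℕ) : (jPoly a b n).natDegree ≤ n := by
  refine le_trans (natDegree_mul_le) ?_
  simp only [natDegree_C, zero_add]
  refine Polynomial.natDegree_sum_le_of_forall_le _ _ fun s hs => ?_
  have hs' : s ≤ n := Nat.lt_succ_iff.mp (Finset.mem_range.mp hs)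
  have t1 : (((X : Polynomial ℝ) - Polynomial.C 1) ^ s).natDegree ≤ s :=
    le_trans natDegree_pow_le (by rw [natDegree_X_sub_C]; omega)
  have t2 : (((X : Polynomial ℝ) - Polynomial.C (-1)) ^ (n - s)).natDegree ≤ n - s :=
    le_trans natDegree_pow_le (by rw [natDegree_X_sub_C]; omega)
  refine le_trans natDegree_mul_le (le_trans (add_le_add (le_trans natDegree_mul_le
    (add_le_add (le_of_eq (natDegree_C _)) t1)) t2) (by omega))

lemma jacobiP_nonneg (a b n : ℕ) {x : ℝ} (hx : 1 ≤ x) : 0 ≤ jacobiP a b n x := by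
  refine Finset.sum_nonneg fun s _ => ?_
  have h1 : (0:ℝ) ≤ (x - 1) / 2 := by linarith
  have h2 : (0:ℝ) ≤ (x + 1) / 2 := by linarith
  positivity

lemma natkey (a b r k : ℕ) (hk : k ≤ r) :
    r.choose k * ((a+r).descFactorial (r-k)) * ((b+r).descFactorial k)
      = r.factorial * ((r+a).choose (r-k) * ((r+b).choose k)) := by
  rw [Nat.descFactorial_eq_factorial_mul_choose, Nat.descFactorial_eq_factorial_mul_choose,
    ← Nat.choose_mul_factorial_mul_factorial hk]
  rw [show a + r = r + a by omega, show b + r = r + b by omega]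
  ring

lemma rodrigues (a b r : ℕ) :
    derivative^[r] ((X - Polynomial.C 1) ^ (a + r) * (X - Polynomial.C (-1)) ^ (b + r)
        : Polynomial ℝ) =
      Polynomial.C ((r.factorial : ℝ) * 2 ^ r) *
        ((X - Polynomial.C 1) ^ a * (X - Polynomial.C (-1)) ^ b * jPoly a b r) := by
  rw [Polynomial.iterate_derivative_mul]
  simp only [Polynomial.iterate_derivative_X_sub_pow]
  apply Polynomial.funext
  intro x
  simp only [jPoly, eval_finset_sum, eval_mul, eval_smul, eval_pow, eval_sub, eval_X, eval_C,
    smul_eq_mul, Finset.mul_sum]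
  refine Finset.sum_congr rfl fun k hk => ?_
  have hk' : k ≤ r := Nat.lt_succ_iff.mp (Finset.mem_range.mp hk)
  have e1 : a + r - (r - k) = a + k := by omega
  have e2 : b + r - k = b + (r - k) := by omega
  rw [e1, e2, pow_add, pow_add]
  have key : (r.choose k : ℝ) * ((a+r).descFactorial (r-k)) * ((b+r).descFactorial k)
      = (r.factorial : ℝ) * ((r+a).choose (r-k) * ((r+b).choose k)) := by
    exact_mod_cast congrArg (Nat.cast (R := ℝ)) (natkey a b r k hk')
  have h2r : (2:ℝ)^r ≠ 0 := by positivity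
  field_simp
  linear_combination key * ((x-1)^a * (x-1)^k * (x - (-1))^b * (x-(-1))^(r-k))

-- boundary vanishing
lemma boundary_vanish (a b r k : ℕ) (hk : k < r) (x : ℝ) (hx : x = 1 ∨ x = -1) :
    (derivative^[k] ((X - Polynomial.C 1) ^ (a + r) * (X - Polynomial.C (-1)) ^ (b + r)
      : Polynomial ℝ)).eval x = 0 := by
  rw [Polynomial.iterate_derivative_mul, Polynomial.eval_finset_sum]
  refine Finset.sum_eq_zero fun i hi => ?_
  have hi' : i ≤ k := Nat.lt_succ_iff.mp (Finset.mem_range.mp hi)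
  simp only [Polynomial.iterate_derivative_X_sub_pow, eval_smul, eval_mul, eval_pow, eval_sub,
    eval_X, eval_C, smul_eq_mul]
  rcases hx with h | h <;> subst h
  · have : a + r - (k - i) ≠ 0 := by omega
    rw [sub_self, zero_pow this]; ring
  · have : b + r - i ≠ 0 := by omega
    rw [show (-1 : ℝ) - (-1) = 0 by ring, zero_pow this]; ring

/-- r-fold integration by parts. -/
lemma parts (h : ℕ → ℝ → ℝ) :
    ∀ r : ℕ, ∀ V : Polynomial ℝ,
    (∀ k < r, (derivative^[k] V).eval 1 = 0 ∧ (derivative^[k] V).eval (-1) = 0) →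
    (∀ k < r, ∀ x ∈ Set.uIcc (-1:ℝ) 1, HasDerivAt (h k) (h (k+1) x) x) →
    (∀ k ≤ r, ContinuousOn (h k) (Set.uIcc (-1:ℝ) 1)) →
    ∫ x in (-1:ℝ)..1, (derivative^[r] V).eval x * h 0 x
      = (-1:ℝ)^r * ∫ x in (-1:ℝ)..1, V.eval x * h r x := by
  intro r
  induction r with
  | zero => intro V _ _ _; simp
  | succ r IH =>
    intro V hV hder hcont
    have step1 : ∫ x in (-1:ℝ)..1, (derivative^[r+1] V).eval x * h 0 x
        = (-1:ℝ)^r * ∫ x in (-1:ℝ)..1, (derivative V).eval x * h r x := by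
      have := IH (derivative V)
        (fun k hk => by
          rw [← Function.iterate_succ_apply]
          exact hV (k+1) (by omega))
        (fun k hk => hder k (by omega)) (fun k hk => hcont k (by omega))
      simpa [Function.iterate_succ_apply] using this
    have step2 : ∫ x in (-1:ℝ)..1, (derivative V).eval x * h r x
        = - ∫ x in (-1:ℝ)..1, V.eval x * h (r+1) x := by
      have hu : ∀ x ∈ Set.uIcc (-1:ℝ) 1, HasDerivAt (h r) (h (r+1) x) x :=
        hder r (by omega)
      have hv : ∀ x ∈ Set.uIcc (-1:ℝ) 1, HasDerivAt (fun y => V.eval y)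
          ((derivative V).eval x) x := fun x _ => V.hasDerivAt x
      have hu' : IntervalIntegrable (h (r+1)) volume (-1:ℝ) 1 :=
        (hcont (r+1) le_rfl).intervalIntegrable
      have hv' : IntervalIntegrable (fun x => (derivative V).eval x) volume (-1:ℝ) 1 :=
        (Polynomial.continuous _).intervalIntegrable _ _
      have ibp := integral_mul_deriv_eq_deriv_mul hu hv hu' hv'
      have h1 : V.eval 1 = 0 := (hV 0 (by omega)).1
      have h2 : V.eval (-1) = 0 := (hV 0 (by omega)).2
      simp only [h1, h2, mul_zero, zero_sub, sub_eq_iff_eq_add] at ibp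
      calc ∫ x in (-1:ℝ)..1, (derivative V).eval x * h r x
          = ∫ x in (-1:ℝ)..1, h r x * (derivative V).eval x := by
            simp_rw [mul_comm]
        _ = - ∫ x in (-1:ℝ)..1, V.eval x * h (r+1) x := by
            rw [ibp]; simp [mul_comm]
    rw [step1, step2, pow_succ]
    ring

/-- Key lemma: Rodrigues + r-fold integration by parts. -/
lemma key_lemma (a b r : ℕ) (h : ℕ → ℝ → ℝ)
    (hder : ∀ k < r, ∀ x ∈ Set.uIcc (-1:ℝ) 1, HasDerivAt (h k) (h (k+1) x) x)
    (hcont : ∀ k ≤ r, ContinuousOn (h k) (Set.uIcc (-1:ℝ) 1)) :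
    ∫ x in (-1:ℝ)..1, (1-x)^a * (1+x)^b * jacobiP a b r x * h 0 x
      = ((r.factorial : ℝ) * 2^r)⁻¹ *
          ∫ x in (-1:ℝ)..1, (1-x)^(a+r) * (1+x)^(b+r) * h r x := by
  set V : Polynomial ℝ := (X - Polynomial.C 1) ^ (a + r) * (X - Polynomial.C (-1)) ^ (b + r)
    with hVdef
  have hpts := parts h r V (fun k hk => ⟨boundary_vanish a b r k hk 1 (Or.inl rfl),
      boundary_vanish a b r k hk (-1) (Or.inr rfl)⟩) hder hcont
  have hrod := rodrigues a b r
  have hfac : ((r.factorial : ℝ) * 2^r) ≠ 0 := by positivity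
  -- rewrite LHS integrand
  have e1 : ∀ x : ℝ, (1-x)^a * (1+x)^b * jacobiP a b r x * h 0 x
      = (-1:ℝ)^a * (((r.factorial : ℝ) * 2^r)⁻¹ * ((derivative^[r] V).eval x * h 0 x)) := by
    intro x
    rw [hrod]
    simp only [eval_mul, eval_C, eval_pow, eval_sub, eval_X, jPoly_eval]
    have : (1-x)^a = (-1:ℝ)^a * (x-1)^a := by
      rw [← neg_pow ]; ring_nf
    rw [this]
    have hx1 : x - (-1) = 1 + x := by ring
    rw [hx1]
    field_simp
  have e2 : ∀ x : ℝ, V.eval x * h r x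
      = (-1:ℝ)^(a+r) * ((1-x)^(a+r) * (1+x)^(b+r) * h r x) := by
    intro x
    simp only [hVdef, eval_mul, eval_pow, eval_sub, eval_X, eval_C]
    have h1 : (x - 1)^(a+r) = (-1:ℝ)^(a+r) * (1-x)^(a+r) := by
      rw [← neg_pow]; ring_nf
    have hx1 : x - (-1) = 1 + x := by ring
    rw [h1, hx1]; ring
  simp_rw [e1]
  rw [intervalIntegral.integral_const_mul, intervalIntegral.integral_const_mul, hpts]
  simp_rw [e2]
  rw [intervalIntegral.integral_const_mul]
  have : (-1:ℝ)^a * (((r.factorial : ℝ) * 2^r)⁻¹ * ((-1:ℝ)^r * ((-1:ℝ)^(a+r) *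
      ∫ x in (-1:ℝ)..1, (1-x)^(a+r) * (1+x)^(b+r) * h r x)))
      = ((-1:ℝ)^a * (-1:ℝ)^r * (-1:ℝ)^(a+r)) * (((r.factorial : ℝ) * 2^r)⁻¹ *
      ∫ x in (-1:ℝ)..1, (1-x)^(a+r) * (1+x)^(b+r) * h r x) := by ring
  rw [this, pow_add]
  have hm : ∀ m : ℕ, (-1:ℝ)^m * (-1:ℝ)^m = 1 := by
    intro m; rw [← pow_add]; exact Even.neg_one_pow ⟨m, by ring⟩
  have hsq : ((-1:ℝ)^a * (-1:ℝ)^r * ((-1:ℝ)^a * (-1:ℝ)^r)) = 1 := by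
    calc (-1:ℝ)^a * (-1:ℝ)^r * ((-1:ℝ)^a * (-1:ℝ)^r)
        = ((-1:ℝ)^a * (-1:ℝ)^a) * ((-1:ℝ)^r * (-1:ℝ)^r) := by ring
      _ = 1 := by rw [hm a, hm r, one_mul]
  rw [hsq, one_mul]

/-- Orthogonality: the Jacobi polynomial kills lower-degree polynomials. -/
lemma ortho (a b r : ℕ) (q : Polynomial ℝ) (hq : q.natDegree < r) :
    ∫ x in (-1:ℝ)..1, (1-x)^a * (1+x)^b * jacobiP a b r x * q.eval x = 0 := by
  have hz : derivative^[r] q = 0 := Polynomial.iterate_derivative_eq_zero hq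
  have := key_lemma a b r (fun k x => (derivative^[k] q).eval x)
    (fun k _ x _ => by
      simpa [Function.iterate_succ_apply'] using (derivative^[k] q).hasDerivAt x)
    (fun k _ => (Polynomial.continuous _).continuousOn)
  simpa [hz] using this

lemma continuous_jacobiP (a b n : ℕ) : Continuous (jacobiP a b n) := by
  have : jacobiP a b n = fun x => (jPoly a b n).eval x :=
    funext fun x => (jPoly_eval a b n x).symm
  rw [this]; exact Polynomial.continuous _

lemma pos_inv (a b r : ℕ) {c : ℝ} (hc : 1 < c) :
    0 ≤ ∫ x in (-1:ℝ)..1, (1-x)^a * (1+x)^b * jacobiP a b r x * (c - x)⁻¹ := by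
  set h : ℕ → ℝ → ℝ := fun k x => (k.factorial : ℝ) * ((c - x)^(k+1))⁻¹ with hh
  have hne : ∀ x ∈ Set.uIcc (-1:ℝ) 1, c - x ≠ 0 := by
    intro x hx
    rw [Set.uIcc_of_le (by norm_num)] at hx
    have := hx.2
    intro hcx; nlinarith [hx.2]
  have hder : ∀ k < r, ∀ x ∈ Set.uIcc (-1:ℝ) 1, HasDerivAt (h k) (h (k+1) x) x := by
    intro k _ x hx
    have hcx : c - x ≠ 0 := hne x hx
    have hbase : HasDerivAt (fun y : ℝ => c - y) (-1) x := by
      simpa using (hasDerivAt_id x).const_sub c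
    have hpow : HasDerivAt (fun y : ℝ => (c - y)^(k+1))
        ((k+1 : ℕ) * (c - x)^k * (-1)) x := by
      simpa using hbase.fun_pow (k+1)
    have hinv := hpow.fun_inv (pow_ne_zero _ hcx)
    have := hinv.const_mul ((k.factorial : ℝ))
    convert this using 1
    rfl
    rfl
    rw [hh]
    simp only
    rw [Nat.factorial_succ]
    push_cast
    field_simp
    ring
  have hcont : ∀ k ≤ r, ContinuousOn (h k) (Set.uIcc (-1:ℝ) 1) := by
    intro k _
    exact (continuousOn_const.mul (((continuousOn_const.sub continuousOn_id).pow _).inv₀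
      (fun x hx => pow_ne_zero _ (hne x hx))))
  have hkey := key_lemma a b r h hder hcont
  have e0 : ∀ x : ℝ, (1-x)^a * (1+x)^b * jacobiP a b r x * (c - x)⁻¹
      = (1-x)^a * (1+x)^b * jacobiP a b r x * h 0 x := by
    intro x; rw [hh]; simp
  simp_rw [e0, hkey]
  have hfac : (0:ℝ) ≤ ((r.factorial : ℝ) * 2^r)⁻¹ := by positivity
  refine mul_nonneg hfac ?_
  refine intervalIntegral.integral_nonneg (by norm_num) fun x hx => ?_
  have h1 : (0:ℝ) ≤ 1 - x := by linarith [hx.2]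
  have h2 : (0:ℝ) ≤ 1 + x := by linarith [hx.1]
  have h3 : (0:ℝ) < c - x := by linarith [hx.2]
  rw [hh]
  simp only
  positivity

lemma A_nonpos (a b r : ℕ) (hr : 2 ≤ r) {t : ℝ} (ht : 0 < t) :
    (∫ x in (-1:ℝ)..1, (1-x)^a * (1+x)^b * jacobiP a b r x *
      (jacobiP (a+1) (b+1) (r-2) x * ((1-x)/(2+t*(1-x))))) ≤ 0 := by
  set c : ℝ := 1 + 2/t with hcdef
  have hc : 1 < c := by
    have : 0 < 2/t := by positivity
    simp [hcdef]; linarith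
  set g : Polynomial ℝ := jPoly (a+1) (b+1) (r-2) with hgdef
  set e : ℝ := g.eval c with hedef
  have hdvd : (X - Polynomial.C c) ∣ (g - Polynomial.C e) :=
    Polynomial.dvd_iff_isRoot.mpr (by simp [Polynomial.IsRoot, hedef])
  set s : Polynomial ℝ := (g - Polynomial.C e) /ₘ (X - Polynomial.C c) with hsdef
  have hfact : g - Polynomial.C e = (X - Polynomial.C c) * s := by
    have hm := Polynomial.modByMonic_add_div (g - Polynomial.C e) (X - Polynomial.C c)
    rw [(Polynomial.modByMonic_eq_zero_iff_dvd (Polynomial.monic_X_sub_C c)).mpr hdvd] at hm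
    rw [← hm]; ring
  have hdegg : g.natDegree ≤ r - 2 := natDegree_jPoly _ _ _
  have hdegs : s.natDegree < r := by
    have h1 : (g - Polynomial.C e).natDegree ≤ r - 2 := by
      refine le_trans (Polynomial.natDegree_sub_le _ _) ?_
      simp [hdegg]
    have h2 : s.natDegree = (g - Polynomial.C e).natDegree - 1 := by
      rw [hsdef, Polynomial.natDegree_divByMonic _ (Polynomial.monic_X_sub_C c),
        Polynomial.natDegree_X_sub_C]
    omega
  have hne : ∀ x ∈ Set.uIcc (-1:ℝ) 1, c - x ≠ 0 := by
    intro x hx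
    rw [Set.uIcc_of_le (by norm_num)] at hx
    intro h; nlinarith [hx.2]
  -- pointwise decomposition
  have hpt : ∀ x ∈ Set.uIcc (-1:ℝ) 1,
      (1-x)^a * (1+x)^b * jacobiP a b r x *
        (jacobiP (a+1) (b+1) (r-2) x * ((1-x)/(2+t*(1-x))))
      = (1/t) * ((1-x)^a * (1+x)^b * jacobiP a b r x * g.eval x)
        - (2/t^2*e) * ((1-x)^a * (1+x)^b * jacobiP a b r x * (c-x)⁻¹)
        + (2/t^2) * ((1-x)^a * (1+x)^b * jacobiP a b r x * s.eval x) := by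
    intro x hx
    have hcx : c - x ≠ 0 := hne x hx
    have hden : 2 + t*(1-x) = t * (c - x) := by
      rw [hcdef]; field_simp; ring
    have hgx : g.eval x = e - (c - x) * s.eval x := by
      have := congrArg (Polynomial.eval x) hfact
      simp only [Polynomial.eval_sub, Polynomial.eval_mul, Polynomial.eval_X,
        Polynomial.eval_C] at this
      linarith [this]
    set W := (1-x)^a * (1+x)^b * jacobiP a b r x with hW
    rw [← jPoly_eval (a+1) (b+1) (r-2) x, ← hgdef, hden, hgx,
      show (1:ℝ)-x = (c-x) - 2/t from by rw [hcdef]; ring]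
    field_simp
    ring
  rw [intervalIntegral.integral_congr hpt]
  -- integrability of the pieces
  have hwP : Continuous fun x : ℝ => (1-x)^a * (1+x)^b * jacobiP a b r x :=
    (((continuous_const.sub continuous_id).pow a).mul
      ((continuous_const.add continuous_id).pow b)).mul (continuous_jacobiP a b r)
  have i1 : IntervalIntegrable (fun x : ℝ => (1/t) *
      ((1-x)^a * (1+x)^b * jacobiP a b r x * g.eval x)) MeasureTheory.volume (-1:ℝ) 1 :=
    (continuous_const.mul ((hwP.mul (Polynomial.continuous g)))).intervalIntegrable _ _
  have i2 : IntervalIntegrable (fun x : ℝ => (2/t^2*e) *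
      ((1-x)^a * (1+x)^b * jacobiP a b r x * (c-x)⁻¹)) MeasureTheory.volume (-1:ℝ) 1 := by
    apply ContinuousOn.intervalIntegrable
    apply ContinuousOn.mul continuousOn_const
    exact hwP.continuousOn.mul (((continuousOn_const.sub continuousOn_id).inv₀ hne))
  have i3 : IntervalIntegrable (fun x : ℝ => (2/t^2) *
      ((1-x)^a * (1+x)^b * jacobiP a b r x * s.eval x)) MeasureTheory.volume (-1:ℝ) 1 :=
    (continuous_const.mul ((hwP.mul (Polynomial.continuous s)))).intervalIntegrable _ _
  rw [intervalIntegral.integral_add (i1.sub i2) i3, intervalIntegral.integral_sub i1 i2]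
  rw [intervalIntegral.integral_const_mul, intervalIntegral.integral_const_mul,
    intervalIntegral.integral_const_mul]
  have o1 : ∫ x in (-1:ℝ)..1, (1-x)^a * (1+x)^b * jacobiP a b r x * g.eval x = 0 :=
    ortho a b r g (by omega)
  have o3 : ∫ x in (-1:ℝ)..1, (1-x)^a * (1+x)^b * jacobiP a b r x * s.eval x = 0 :=
    ortho a b r s hdegs
  have hIb : 0 ≤ ∫ x in (-1:ℝ)..1, (1-x)^a * (1+x)^b * jacobiP a b r x * (c-x)⁻¹ :=
    pos_inv a b r hc
  have he : 0 ≤ e := by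
    rw [hedef, hgdef, jPoly_eval]
    exact jacobiP_nonneg _ _ _ hc.le
  rw [o1, o3]
  have : 0 ≤ (2/t^2*e) * ∫ x in (-1:ℝ)..1, (1-x)^a * (1+x)^b * jacobiP a b r x * (c-x)⁻¹ := by
    apply mul_nonneg (by positivity) hIb
  linarith

lemma log_rep {x ρ : ℝ} (hx : x ∈ Set.Icc (-1:ℝ) 1) (hρ : 0 < ρ) :
    ∫ t in (0:ℝ)..ρ, (1-x)/(2+t*(1-x)) = Real.log (1 + ρ*(1-x)/2) := by
  have h1x : (0:ℝ) ≤ 1 - x := by linarith [hx.2]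
  have hpos : ∀ t ∈ Set.uIcc (0:ℝ) ρ, (0:ℝ) < 1 + t*(1-x)/2 := by
    intro t ht
    rw [Set.uIcc_of_le hρ.le] at ht
    nlinarith [ht.1]
  have hder : ∀ t ∈ Set.uIcc (0:ℝ) ρ,
      HasDerivAt (fun u : ℝ => Real.log (1 + u*(1-x)/2)) ((1-x)/(2+t*(1-x))) t := by
    intro t ht
    have hin : HasDerivAt (fun u : ℝ => 1 + u*(1-x)/2) ((1-x)/2) t := by
      have h0 : HasDerivAt (fun u : ℝ => 1 + u*((1-x)/2)) ((1-x)/2) t := by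
        simpa using ((hasDerivAt_id t).mul_const ((1-x)/2)).const_add 1
      convert h0 using 2 with u
      ring
    have hlog := (hin.log (hpos t ht).ne')
    convert hlog using 1
    have hp := hpos t ht
    field_simp
  have hcont : IntervalIntegrable (fun t : ℝ => (1-x)/(2+t*(1-x)))
      MeasureTheory.volume (0:ℝ) ρ := by
    apply ContinuousOn.intervalIntegrable
    apply ContinuousOn.div continuousOn_const
    · exact continuousOn_const.add (continuousOn_id.mul continuousOn_const)
    · intro t ht; exact by nlinarith [hpos t ht]
  rw [intervalIntegral.integral_eq_sub_of_hasDerivAt hder hcont]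
  simp

lemma swap_lemma {ρ : ℝ} (hρ : 0 < ρ) (W G : ℝ → ℝ)
    (hW : Continuous W) (hG : Continuous G) :
    ∫ x in (-1:ℝ)..1, ∫ t in (0:ℝ)..ρ, W x * (G x * ((1-x)/(2+t*(1-x))))
      = ∫ t in (0:ℝ)..ρ, ∫ x in (-1:ℝ)..1, W x * (G x * ((1-x)/(2+t*(1-x)))) := by
  set F : ℝ → ℝ → ℝ := fun x t => W x * (G x * ((1-x)/(2+t*(1-x)))) with hF
  have hcont : ContinuousOn (Function.uncurry F)
      ((Set.Icc (-1:ℝ) 1) ×ˢ (Set.Icc (0:ℝ) ρ)) := by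
    have hden : ∀ p ∈ (Set.Icc (-1:ℝ) 1) ×ˢ (Set.Icc (0:ℝ) ρ),
        (2 + p.2*(1-p.1)) ≠ 0 := by
      rintro ⟨x, t⟩ ⟨hx, ht⟩
      have : (0:ℝ) ≤ 1 - x := by linarith [hx.2]
      have : (0:ℝ) ≤ t := ht.1
      simp only
      nlinarith
    refine ContinuousOn.mul (hW.comp continuous_fst).continuousOn ?_
    refine ContinuousOn.mul (hG.comp continuous_fst).continuousOn ?_
    refine ContinuousOn.div ?_ ?_ hden
    · exact (continuous_const.sub continuous_fst).continuousOn
    · exact (continuous_const.add (continuous_snd.mul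
        (continuous_const.sub continuous_fst))).continuousOn
  have hint : Integrable (Function.uncurry F)
      ((volume.restrict (Set.Ioc (-1:ℝ) 1)).prod (volume.restrict (Set.Ioc (0:ℝ) ρ))) := by
    rw [Measure.prod_restrict]
    refine (hcont.integrableOn_compact (isCompact_Icc.prod isCompact_Icc)).mono_set ?_
    exact Set.prod_mono Set.Ioc_subset_Icc_self Set.Ioc_subset_Icc_self
  have h1 : (-1:ℝ) ≤ 1 := by norm_num
  rw [intervalIntegral.integral_of_le h1, intervalIntegral.integral_of_le hρ.le]
  simp_rw [intervalIntegral.integral_of_le h1, intervalIntegral.integral_of_le hρ.le]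
  exact MeasureTheory.integral_integral_swap hint

/-- Logarithm bound step: for every `ρ > 0`,
`Q(ρ) ≤ (ρ/(2 ln 2)) ∫_{-1}^1 (1-x)^{a+1}(1+x)^b P_r^{a,b}(x) P_{r-2}^{a+1,b+1}(x) dx`. -/
theorem Q_le_linearized (a b r : ℕ) (hr : 2 ≤ r) :
    ∀ ρ : ℝ, 0 < ρ →
      (∫ x in (-1 : ℝ)..1,
          (1 - x) ^ a * (1 + x) ^ b * Real.logb 2 (1 + ρ * (1 - x) / 2) *
            jacobiP a b r x * jacobiP (a + 1) (b + 1) (r - 2) x) ≤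
        ρ / (2 * Real.log 2) *
          ∫ x in (-1 : ℝ)..1,
            (1 - x) ^ (a + 1) * (1 + x) ^ b * jacobiP a b r x *
              jacobiP (a + 1) (b + 1) (r - 2) x := by
  intro ρ hρ
  have h1 : (-1:ℝ) ≤ 1 := by norm_num
  have hdegG := natDegree_jPoly (a+1) (b+1) (r-2)
  have hdeg1 : (Polynomial.C (1:ℝ) - X).natDegree ≤ 1 := by
    rw [show (Polynomial.C (1:ℝ) - X) = -(X - Polynomial.C 1) by ring, natDegree_neg,
      natDegree_X_sub_C]
  -- RHS integral is zero by orthogonality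
  have hq2 : ((Polynomial.C (1:ℝ) - X) * jPoly (a+1) (b+1) (r-2)).natDegree < r := by
    have := natDegree_mul_le (p := Polynomial.C (1:ℝ) - X) (q := jPoly (a+1) (b+1) (r-2))
    omega
  have hRHS : (∫ x in (-1:ℝ)..1, (1 - x) ^ (a + 1) * (1 + x) ^ b * jacobiP a b r x *
      jacobiP (a + 1) (b + 1) (r - 2) x) = 0 := by
    have horth := ortho a b r ((Polynomial.C (1:ℝ) - X) * jPoly (a+1) (b+1) (r-2)) hq2
    rw [← horth]
    refine intervalIntegral.integral_congr fun x hx => ?_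
    simp only [eval_mul, eval_sub, eval_C, eval_X, jPoly_eval]
    ring
  rw [hRHS, mul_zero]
  -- LHS: rewrite logb and bound
  have hlog2 : (0:ℝ) < Real.log 2 := Real.log_pos (by norm_num)
  have hLHS : (∫ x in (-1:ℝ)..1, (1 - x) ^ a * (1 + x) ^ b *
      Real.logb 2 (1 + ρ * (1 - x) / 2) *
      jacobiP a b r x * jacobiP (a + 1) (b + 1) (r - 2) x)
      = (Real.log 2)⁻¹ * ∫ x in (-1:ℝ)..1, ((1-x)^a*(1+x)^b*jacobiP a b r x) *
          ((jacobiP (a+1) (b+1) (r-2) x) * Real.log (1 + ρ*(1-x)/2)) := by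
    rw [← intervalIntegral.integral_const_mul]
    refine intervalIntegral.integral_congr fun x hx => ?_
    simp only [Real.logb]
    field_simp
  rw [hLHS]
  have hstep : (∫ x in (-1:ℝ)..1, ((1-x)^a*(1+x)^b*jacobiP a b r x) *
      ((jacobiP (a+1) (b+1) (r-2) x) * Real.log (1 + ρ*(1-x)/2))) ≤ 0 := by
    have hrep : Set.EqOn
        (fun x : ℝ => ((1-x)^a*(1+x)^b*jacobiP a b r x) *
          ((jacobiP (a+1) (b+1) (r-2) x) * Real.log (1 + ρ*(1-x)/2)))
        (fun x : ℝ => ∫ t in (0:ℝ)..ρ, ((1-x)^a*(1+x)^b*jacobiP a b r x) *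
          ((jacobiP (a+1) (b+1) (r-2) x) * ((1-x)/(2+t*(1-x)))))
        (Set.uIcc (-1:ℝ) 1) := by
      intro x hx
      rw [Set.uIcc_of_le h1] at hx
      simp only
      calc ((1-x)^a*(1+x)^b*jacobiP a b r x) *
            ((jacobiP (a+1) (b+1) (r-2) x) * Real.log (1 + ρ*(1-x)/2))
          = ((1-x)^a*(1+x)^b*jacobiP a b r x * jacobiP (a+1) (b+1) (r-2) x) *
              ∫ t in (0:ℝ)..ρ, (1-x)/(2+t*(1-x)) := by rw [log_rep hx hρ]; ring
        _ = ∫ t in (0:ℝ)..ρ, ((1-x)^a*(1+x)^b*jacobiP a b r x *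
              jacobiP (a+1) (b+1) (r-2) x) * ((1-x)/(2+t*(1-x))) :=
            (intervalIntegral.integral_const_mul _ _).symm
        _ = ∫ t in (0:ℝ)..ρ, ((1-x)^a*(1+x)^b*jacobiP a b r x) *
              ((jacobiP (a+1) (b+1) (r-2) x) * ((1-x)/(2+t*(1-x)))) :=
            intervalIntegral.integral_congr fun t ht => by ring
    rw [intervalIntegral.integral_congr hrep]
    have hwP : Continuous fun x : ℝ => (1-x)^a * (1+x)^b * jacobiP a b r x :=
      (((continuous_const.sub continuous_id).pow a).mul
        ((continuous_const.add continuous_id).pow b)).mul (continuous_jacobiP a b r)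
    rw [swap_lemma hρ _ _ hwP (continuous_jacobiP (a+1) (b+1) (r-2))]
    have hA : ∀ t ∈ Set.Icc (0:ℝ) ρ,
        (∫ x in (-1:ℝ)..1, ((1-x)^a*(1+x)^b*jacobiP a b r x) *
          ((jacobiP (a+1) (b+1) (r-2) x) * ((1-x)/(2+t*(1-x))))) ≤ 0 := by
      intro t ht
      rcases eq_or_lt_of_le ht.1 with h0 | h0
      · -- t = 0 : the integral is zero by orthogonality
        subst h0
        have hq3 : (jPoly (a+1) (b+1) (r-2) *
            (Polynomial.C (2⁻¹:ℝ) * (Polynomial.C 1 - X))).natDegree < r := by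
          have hm1 := natDegree_mul_le (p := jPoly (a+1) (b+1) (r-2))
            (q := Polynomial.C (2⁻¹:ℝ) * (Polynomial.C 1 - X))
          have hm2 := natDegree_mul_le (p := Polynomial.C (2⁻¹:ℝ))
            (q := Polynomial.C (1:ℝ) - X)
          simp only [natDegree_C] at hm2
          omega
        have horth := ortho a b r (jPoly (a+1) (b+1) (r-2) *
          (Polynomial.C (2⁻¹:ℝ) * (Polynomial.C 1 - X))) hq3
        have : (∫ x in (-1:ℝ)..1, ((1-x)^a*(1+x)^b*jacobiP a b r x) *
            ((jacobiP (a+1) (b+1) (r-2) x) * ((1-x)/(2+0*(1-x))))) = 0 := by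
          refine Eq.trans (intervalIntegral.integral_congr fun x hx => ?_) horth
          simp only [eval_mul, eval_sub, eval_C, eval_X, jPoly_eval]
          ring
        rw [this]
      · exact A_nonpos a b r hr h0
    have hneg : (0:ℝ) ≤ ∫ t in (0:ℝ)..ρ,
        -(∫ x in (-1:ℝ)..1, ((1-x)^a*(1+x)^b*jacobiP a b r x) *
          ((jacobiP (a+1) (b+1) (r-2) x) * ((1-x)/(2+t*(1-x))))) :=
      intervalIntegral.integral_nonneg hρ.le fun t ht => neg_nonneg.mpr (hA t ht)
    rw [intervalIntegral.integral_neg] at hneg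
    linarith
  have : (Real.log 2)⁻¹ * (∫ x in (-1:ℝ)..1, ((1-x)^a*(1+x)^b*jacobiP a b r x) *
      ((jacobiP (a+1) (b+1) (r-2) x) * Real.log (1 + ρ*(1-x)/2))) ≤ 0 := by
    apply mul_nonpos_of_nonneg_of_nonpos (by positivity) hstep
  linarith
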